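/- arXiv:2408.09737 — 2 statements merged into one kernel-verified Lean document; each statement's English description precedes it below -/
import Mathlib

section
/- There is a Hopf algebra structure on R = R_{mn}(q) whose comultiplication Δ, counit ε and antipode S satisfy Δ(g) = g⊗g, Δ(x) = x⊗g + 1⊗x, ε(g) = 1, ε(x) = 0, S(g) = g^{mn-1}, and S(x) = -x g^{-1}. -/
open scoped TensorProduct

/-- The defining relations of the Radford Hopf algebra `R_{mn}(q)`:
the free algebra on two generators `g = ι true` and `x = ι false` is quotiented by
`g^{mn} = 1`, `x^n = g^n - 1` and `xg = q·gx`. -/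
inductive RadfordRel (K : Type*) [Field K] (q : K) (m n : ℕ) :
    FreeAlgebra K Bool → FreeAlgebra K Bool → Prop
  | gOrder : RadfordRel K q m n ((FreeAlgebra.ι K true) ^ (m * n)) 1
  | xPow : RadfordRel K q m n ((FreeAlgebra.ι K false) ^ n) ((FreeAlgebra.ι K true) ^ n - 1)
  | xg : RadfordRel K q m n (FreeAlgebra.ι K false * FreeAlgebra.ι K true)
      (q • (FreeAlgebra.ι K true * FreeAlgebra.ι K false))

/-- The Radford algebra `R = R_{mn}(q)`. -/
abbrev Radford (K : Type*) [Field K] (q : K) (m n : ℕ) : Type _ :=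
  RingQuot (RadfordRel K q m n)

/-- The generator `g` of the Radford algebra. -/
noncomputable abbrev Radford.g (K : Type*) [Field K] (q : K) (m n : ℕ) : Radford K q m n :=
  RingQuot.mkAlgHom K (RadfordRel K q m n) (FreeAlgebra.ι K true)

/-- The generator `x` of the Radford algebra. -/
noncomputable abbrev Radford.x (K : Type*) [Field K] (q : K) (m n : ℕ) : Radford K q m n :=
  RingQuot.mkAlgHom K (RadfordRel K q m n) (FreeAlgebra.ι K false)

namespace RadfordAux

variable {K : Type*} [Field K]

/-- Gaussian binomial coefficients via the recurrence `gb (N+1) (k+1) = gb N k + q^(k+1) gb N (k+1)`. -/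
def gb (q : K) : ℕ → ℕ → K
  | 0, 0 => 1
  | 0, _ + 1 => 0
  | N + 1, 0 => gb q N 0
  | N + 1, k + 1 => gb q N k + q ^ (k + 1) * gb q N (k + 1)

lemma gb_zero (q : K) : ∀ N, gb q N 0 = 1
  | 0 => rfl
  | N + 1 => gb_zero q N

lemma gb_of_lt (q : K) : ∀ N k, N < k → gb q N k = 0
  | 0, _ + 1, _ => rfl
  | N + 1, k + 1, h => by
      rw [gb, gb_of_lt q N k (by omega), gb_of_lt q N (k + 1) (by omega)]; ring

lemma gb_diag (q : K) : ∀ N, gb q N N = 1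
  | 0 => rfl
  | N + 1 => by rw [gb, gb_diag q N, gb_of_lt q N (N + 1) (by omega)]; ring

lemma prod_eq_zero_of_lt (q : K) {N k : ℕ} (h : N < k) :
    ∏ i ∈ Finset.range k, (q ^ (N - i) - 1) = 0 :=
  Finset.prod_eq_zero (Finset.mem_range.2 h) (by simp [Nat.sub_self])

lemma gb_mul_prod (q : K) : ∀ N k, gb q N k * ∏ i ∈ Finset.range k, (q ^ (i + 1) - 1)
    = ∏ i ∈ Finset.range k, (q ^ (N - i) - 1)
  | N, 0 => by simp [gb_zero]
  | 0, k + 1 => by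
      rw [gb_of_lt q 0 (k + 1) (by omega), prod_eq_zero_of_lt q (by omega), zero_mul]
  | N + 1, k + 1 => by
      have h1 := gb_mul_prod q N k
      have h2 := gb_mul_prod q N (k + 1)
      rw [Finset.prod_range_succ, Finset.prod_range_succ] at h2
      have hr : ∏ i ∈ Finset.range (k + 1), (q ^ (N + 1 - i) - 1)
          = (∏ i ∈ Finset.range k, (q ^ (N - i) - 1)) * (q ^ (N + 1) - 1) := by
        rw [Finset.prod_range_succ']
        exact congrArg (· * (q ^ (N + 1 - 0) - 1))
          (Finset.prod_congr rfl fun i _ => by rw [Nat.succ_sub_succ])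
      rw [gb, Finset.prod_range_succ, hr]
      rcases le_or_gt k N with h | h
      · have hpow : q ^ (k + 1) * q ^ (N - k) = q ^ (N + 1) := by
          rw [← pow_add]; congr 1; omega
        linear_combination (q ^ (k + 1) - 1) * h1 + q ^ (k + 1) * h2
          + (∏ i ∈ Finset.range k, (q ^ (N - i) - 1)) * hpow
      · rw [gb_of_lt q N k h, gb_of_lt q N (k + 1) (by omega),
          prod_eq_zero_of_lt q h]
        ring

lemma gb_eq_zero {q : K} {n : ℕ} (hq : IsPrimitiveRoot q n) {k : ℕ} (h0 : 0 < k)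
    (hk : k < n) : gb q n k = 0 := by
  have h := gb_mul_prod q n k
  have hz : ∏ i ∈ Finset.range k, (q ^ (n - i) - 1) = 0 :=
    Finset.prod_eq_zero (Finset.mem_range.2 h0)
      (by rw [Nat.sub_zero, hq.pow_eq_one, sub_self])
  have hnz : ∏ i ∈ Finset.range k, (q ^ (i + 1) - 1) ≠ 0 := by
    rw [Finset.prod_ne_zero_iff]
    intro i hi
    exact sub_ne_zero.2 (hq.pow_ne_one_of_pos_of_lt (by omega)
      (by have := Finset.mem_range.1 hi; omega))
  rw [hz] at h
  exact (mul_eq_zero.1 h).resolve_right hnz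

lemma smul_commute_pow {A : Type*} [Ring A] [Algebra K A] {q : K} {a b : A}
    (h : b * a = q • (a * b)) : ∀ k, b * a ^ k = q ^ k • (a ^ k * b)
  | 0 => by simp
  | k + 1 => by
      rw [pow_succ, ← mul_assoc, smul_commute_pow h k, smul_mul_assoc, mul_assoc, h,
        mul_smul_comm, smul_smul, ← pow_succ, ← mul_assoc, ← pow_succ]

lemma add_pow_q {A : Type*} [Ring A] [Algebra K A] {q : K} {a b : A}
    (h : b * a = q • (a * b)) (N : ℕ) :
    (a + b) ^ N = ∑ k ∈ Finset.range (N + 1), gb q N k • (a ^ k * b ^ (N - k)) := by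
  induction N with
  | zero => simp [gb]
  | succ N ih =>
    rw [pow_succ', ih, Finset.mul_sum]
    have hterm : ∀ k ∈ Finset.range (N + 1),
        (a + b) * (gb q N k • (a ^ k * b ^ (N - k)))
        = gb q N k • (a ^ (k + 1) * b ^ (N - k))
          + (q ^ k * gb q N k) • (a ^ k * b ^ (N + 1 - k)) := by
      intro k hk
      have hk' : k ≤ N := by have := Finset.mem_range.1 hk; omega
      have hN : N + 1 - k = (N - k) + 1 := by omega
      rw [hN, add_mul, mul_smul_comm, mul_smul_comm, ← mul_assoc, ← mul_assoc,
        ← pow_succ', smul_commute_pow h k, smul_mul_assoc, smul_smul,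
        mul_comm (q ^ k) (gb q N k), ← smul_smul, mul_assoc, ← pow_succ']
      rw [smul_smul, mul_comm (gb q N k) (q ^ k)]
    rw [Finset.sum_congr rfl hterm, Finset.sum_add_distrib]
    -- rewrite target
    rw [Finset.sum_range_succ' (fun k => gb q (N + 1) k • (a ^ k * b ^ (N + 1 - k))) (N + 1)]
    have hgb : ∀ k, gb q (N + 1) (k + 1) = gb q N k + q ^ (k + 1) * gb q N (k + 1) :=
      fun k => rfl
    have hs2 : ∑ k ∈ Finset.range (N + 1), (q ^ k * gb q N k) • (a ^ k * b ^ (N + 1 - k))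
        = (∑ k ∈ Finset.range (N + 1),
            (q ^ (k + 1) * gb q N (k + 1)) • (a ^ (k + 1) * b ^ (N - k)))
          + gb q N 0 • (1 * b ^ (N + 1)) := by
      rw [Finset.sum_range_succ' (fun k => (q ^ k * gb q N k) • (a ^ k * b ^ (N + 1 - k))) N]
      rw [Finset.sum_range_succ
        (fun k => (q ^ (k + 1) * gb q N (k + 1)) • (a ^ (k + 1) * b ^ (N - k))) N]
      rw [gb_of_lt q N (N + 1) (by omega)]
      simp
    rw [hs2]
    rw [← add_assoc, ← Finset.sum_add_distrib]
    congr 1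
    · apply Finset.sum_congr rfl
      intro k hk
      rw [hgb, add_smul, Nat.succ_sub_succ]
    · rw [gb_zero, gb_zero]; simp

lemma add_pow_prim {A : Type*} [Ring A] [Algebra K A] {q : K} {n : ℕ}
    (hq : IsPrimitiveRoot q n) (hn : 1 ≤ n) {a b : A} (h : b * a = q • (a * b)) :
    (a + b) ^ n = a ^ n + b ^ n := by
  obtain ⟨M, rfl⟩ : ∃ M, n = M + 1 := ⟨n - 1, by omega⟩
  rw [add_pow_q h, Finset.sum_range_succ, Finset.sum_range_succ', gb_diag, gb_zero]
  have : ∀ k ∈ Finset.range M,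
      gb q (M + 1) (k + 1) • (a ^ (k + 1) * b ^ (M + 1 - (k + 1))) = 0 := by
    intro k hk
    rw [gb_eq_zero hq (by omega) (by have := Finset.mem_range.1 hk; omega), zero_smul]
  rw [Finset.sum_congr rfl this]
  simp [add_comm]

lemma neg_pow_helper {q : K} {A : Type*} [Ring A] [Algebra K A] {x G gn : A} {n : ℕ}
    (h1 : (x * G) ^ n = (∏ i ∈ Finset.range n, q ^ i) • (x ^ n * G ^ n))
    (hc : (-1 : K) ^ n * ∏ i ∈ Finset.range n, q ^ i = -1)
    (hx : x ^ n = gn - 1) (hg : gn * G ^ n = 1) :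
    (-(x * G)) ^ n = G ^ n - 1 := by
  rw [← neg_one_smul K (x * G), smul_pow, h1, smul_smul, hc, hx, neg_one_smul, sub_mul,
    one_mul, hg, neg_sub]

lemma antipode_xg_helper {q : K} {A : Type*} [Ring A] [Algebra K A] {x G : A}
    (h : G * x = q • (x * G)) : G * -(x * G) = q • (-(x * G) * G) := by
  rw [mul_neg, neg_mul, smul_neg, ← mul_assoc, h, smul_mul_assoc]

end RadfordAux

-- ===== Radford-algebra auxiliary lemmas =====
namespace RadfordAux

variable {K : Type*} [Field K] {q : K} {m n : ℕ}

lemma g_ord : Radford.g K q m n ^ (m * n) = 1 := by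
  have h := RingQuot.mkAlgHom_rel K (RadfordRel.gOrder (K := K) (q := q) (m := m) (n := n))
  simpa only [map_pow, map_one] using h

lemma x_pow : Radford.x K q m n ^ n = Radford.g K q m n ^ n - 1 := by
  have h := RingQuot.mkAlgHom_rel K (RadfordRel.xPow (K := K) (q := q) (m := m) (n := n))
  simpa only [map_pow, map_sub, map_one] using h

lemma xg_rel : Radford.x K q m n * Radford.g K q m n
    = q • (Radford.g K q m n * Radford.x K q m n) := by
  have h := RingQuot.mkAlgHom_rel K (RadfordRel.xg (K := K) (q := q) (m := m) (n := n))
  simpa only [map_mul, map_smul] using h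

lemma smul_commute_pow' {A : Type*} [Ring A] [Algebra K A] {q : K} {a b : A}
    (h : b * a = q • (a * b)) : ∀ k, b ^ k * a = q ^ k • (a * b ^ k)
  | 0 => by simp
  | k + 1 => by
      rw [pow_succ', mul_assoc, smul_commute_pow' h k, mul_smul_comm, ← mul_assoc, h,
        smul_mul_assoc, smul_smul, ← pow_succ, mul_assoc, ← pow_succ']

lemma one_le_mn {m n : ℕ} (hm : 2 ≤ m) (hn : 1 ≤ n) : 1 ≤ m * n :=
  Nat.one_le_iff_ne_zero.2 (by positivity)

lemma gG (hm : 2 ≤ m) (hn : 1 ≤ n) :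
    Radford.g K q m n * Radford.g K q m n ^ (m * n - 1) = 1 := by
  rw [← pow_succ']
  have : m * n - 1 + 1 = m * n := by have := one_le_mn hm hn; omega
  rw [this, g_ord]

lemma Gg (hm : 2 ≤ m) (hn : 1 ≤ n) :
    Radford.g K q m n ^ (m * n - 1) * Radford.g K q m n = 1 := by
  rw [← pow_succ]
  have : m * n - 1 + 1 = m * n := by have := one_le_mn hm hn; omega
  rw [this, g_ord]

lemma q_pow_mn (hq : IsPrimitiveRoot q n) : q ^ (m * n) = 1 := by
  rw [mul_comm, pow_mul, hq.pow_eq_one, one_pow]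

lemma Gx (hm : 2 ≤ m) (hn : 1 ≤ n) (hq : IsPrimitiveRoot q n) :
    Radford.g K q m n ^ (m * n - 1) * Radford.x K q m n
      = q • (Radford.x K q m n * Radford.g K q m n ^ (m * n - 1)) := by
  have h := smul_commute_pow (a := Radford.g K q m n) (b := Radford.x K q m n)
    (q := q) xg_rel (m * n - 1)
  have he : (m * n - 1) + 1 = m * n := by have := one_le_mn hm hn; omega
  rw [h, smul_smul, ← pow_succ', he, q_pow_mn hq, one_smul]

lemma xG_pow (hm : 2 ≤ m) (hn : 1 ≤ n) (hq : IsPrimitiveRoot q n) :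
    ∀ j, (Radford.x K q m n * Radford.g K q m n ^ (m * n - 1)) ^ j
      = (∏ i ∈ Finset.range j, q ^ i)
          • (Radford.x K q m n ^ j * (Radford.g K q m n ^ (m * n - 1)) ^ j)
  | 0 => by simp
  | j + 1 => by
      set x := Radford.x K q m n
      set G := Radford.g K q m n ^ (m * n - 1) with hG
      have hGx : ∀ k, G ^ k * x = q ^ k • (x * G ^ k) :=
        smul_commute_pow' (Gx hm hn hq)
      calc (x * G) ^ (j + 1) = (x * G) ^ j * (x * G) := by rw [pow_succ]
        _ = ((∏ i ∈ Finset.range j, q ^ i) • (x ^ j * G ^ j)) * (x * G) := by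
            rw [xG_pow hm hn hq j]
        _ = (∏ i ∈ Finset.range j, q ^ i) • (x ^ j * (G ^ j * x) * G) := by
            rw [smul_mul_assoc, mul_assoc, mul_assoc, mul_assoc]
        _ = (∏ i ∈ Finset.range j, q ^ i) • (x ^ j * (q ^ j • (x * G ^ j)) * G) := by
            rw [hGx j]
        _ = ((∏ i ∈ Finset.range j, q ^ i) * q ^ j) • (x ^ (j + 1) * G ^ (j + 1)) := by
            rw [mul_smul_comm, smul_mul_assoc, smul_smul]
            congr 1
            rw [← mul_assoc, ← pow_succ, mul_assoc, ← pow_succ]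
        _ = (∏ i ∈ Finset.range (j + 1), q ^ i) • (x ^ (j + 1) * G ^ (j + 1)) := by
            rw [Finset.prod_range_succ]

lemma cval (hn : 1 ≤ n) (hq : IsPrimitiveRoot q n) :
    (-1 : K) ^ n * ∏ i ∈ Finset.range n, q ^ i = -1 := by
  have hsum2 := Finset.sum_range_id_mul_two n
  have hprod : ∏ i ∈ Finset.range n, q ^ i = q ^ (∑ i ∈ Finset.range n, i) :=
    Finset.prod_pow_eq_pow_sum _ _ _
  rcases Nat.even_or_odd n with he | ho
  · obtain ⟨t, rfl⟩ := he
    have ht : 1 ≤ t := by omega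
    have hsum : ∑ i ∈ Finset.range (t + t), i = t * (t + t - 1) := by
      have h2 : (t + t) * (t + t - 1) = t * (t + t - 1) * 2 := by
        zify [show 1 ≤ t + t by omega]; ring
      omega
    have hqt : q ^ t = -1 := by
      have h2 : (q ^ t - 1) * (q ^ t + 1) = 0 := by
        have : q ^ t * q ^ t = 1 := by rw [← pow_add, hq.pow_eq_one]
        ring_nf
        linear_combination this
      have hne : q ^ t ≠ 1 := hq.pow_ne_one_of_pos_of_lt (by omega) (by omega)
      rcases mul_eq_zero.1 h2 with h | h
      · exact absurd (by linear_combination h) hne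
      · linear_combination h
    rw [hprod, hsum, pow_mul, hqt, Even.neg_one_pow ⟨t, rfl⟩, one_mul,
      Odd.neg_one_pow ⟨t - 1, by omega⟩]
  · obtain ⟨t, rfl⟩ := ho
    have hsum : ∑ i ∈ Finset.range (2 * t + 1), i = (2 * t + 1) * t := by
      have h2 : (2 * t + 1) * (2 * t + 1 - 1) = (2 * t + 1) * t * 2 := by
        zify [show 1 ≤ 2 * t + 1 by omega]; ring
      omega
    rw [hprod, hsum, pow_mul, hq.pow_eq_one, one_pow, mul_one,
      Odd.neg_one_pow ⟨t, by omega⟩]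

end RadfordAux

-- ===== the structure maps =====
namespace Maps

variable (K : Type*) [Field K] (q : K) (m n : ℕ)

open RadfordAux Algebra.TensorProduct

/-- The comultiplication. -/
noncomputable def Δmap (hn : 1 ≤ n) (hq : IsPrimitiveRoot q n) :
    Radford K q m n →ₐ[K] Radford K q m n ⊗[K] Radford K q m n :=
  RingQuot.liftAlgHom K ⟨FreeAlgebra.lift K
      (fun b => if b then Radford.g K q m n ⊗ₜ[K] Radford.g K q m n
        else Radford.x K q m n ⊗ₜ[K] Radford.g K q m n + 1 ⊗ₜ[K] Radford.x K q m n),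
    by
      intro a b r
      induction r with
      | gOrder =>
          rw [map_pow, map_one, FreeAlgebra.lift_ι_apply, if_pos rfl,
            Algebra.TensorProduct.tmul_pow, g_ord, Algebra.TensorProduct.one_def]
      | xPow =>
          rw [map_pow, map_sub, map_one, map_pow, FreeAlgebra.lift_ι_apply,
            FreeAlgebra.lift_ι_apply, if_pos rfl, if_neg (by simp)]
          have hcomm : (1 : Radford K q m n) ⊗ₜ[K] Radford.x K q m n *
              (Radford.x K q m n ⊗ₜ[K] Radford.g K q m n)
              = q • ((Radford.x K q m n ⊗ₜ[K] Radford.g K q m n) *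
                ((1 : Radford K q m n) ⊗ₜ[K] Radford.x K q m n)) := by
            rw [Algebra.TensorProduct.tmul_mul_tmul, Algebra.TensorProduct.tmul_mul_tmul,
              one_mul, mul_one, xg_rel, TensorProduct.tmul_smul]
          rw [add_pow_prim (a := Radford.x K q m n ⊗ₜ[K] Radford.g K q m n)
            (b := (1 : Radford K q m n) ⊗ₜ[K] Radford.x K q m n) hq hn hcomm, Algebra.TensorProduct.tmul_pow,
            Algebra.TensorProduct.tmul_pow, Algebra.TensorProduct.tmul_pow, x_pow, one_pow,
            TensorProduct.sub_tmul, TensorProduct.tmul_sub, Algebra.TensorProduct.one_def]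
          abel
      | xg =>
          rw [map_smul, map_mul, map_mul, FreeAlgebra.lift_ι_apply, FreeAlgebra.lift_ι_apply,
            if_pos rfl, if_neg (by simp)]
          simp only [add_mul, mul_add, Algebra.TensorProduct.tmul_mul_tmul, one_mul, mul_one,
            xg_rel, TensorProduct.tmul_smul, TensorProduct.smul_tmul', smul_add]⟩

/-- The counit. -/
noncomputable def εmap (hn : 1 ≤ n) : Radford K q m n →ₐ[K] K :=
  RingQuot.liftAlgHom K ⟨FreeAlgebra.lift K (fun b => if b then (1 : K) else 0),
    by
      intro a b r
      induction r with
      | gOrder => simp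
      | xPow =>
          rw [map_pow, map_sub, map_one, map_pow, FreeAlgebra.lift_ι_apply,
            FreeAlgebra.lift_ι_apply, if_pos rfl, if_neg (by simp)]
          rw [zero_pow (by omega), one_pow, sub_self]
      | xg => simp⟩

/-- The antipode, as an algebra map into the opposite algebra. -/
noncomputable def Smap' (hm : 2 ≤ m) (hn : 1 ≤ n) (hq : IsPrimitiveRoot q n) :
    Radford K q m n →ₐ[K] (Radford K q m n)ᵐᵒᵖ :=
  RingQuot.liftAlgHom K ⟨FreeAlgebra.lift K
      (fun b => if b then MulOpposite.op (Radford.g K q m n ^ (m * n - 1))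
        else MulOpposite.op (-(Radford.x K q m n * Radford.g K q m n ^ (m * n - 1)))),
    by
      intro a b r
      induction r with
      | gOrder =>
          rw [map_pow, map_one, FreeAlgebra.lift_ι_apply, if_pos rfl,
            ← MulOpposite.op_pow, ← pow_mul, mul_comm (m * n - 1) (m * n), pow_mul, g_ord,
            one_pow, MulOpposite.op_one]
      | xPow =>
          rw [map_pow, map_sub, map_one, map_pow, FreeAlgebra.lift_ι_apply,
            FreeAlgebra.lift_ι_apply, if_pos rfl, if_neg (by simp),
            ← MulOpposite.op_pow, ← MulOpposite.op_pow, ← MulOpposite.op_one,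
            ← MulOpposite.op_sub]
          congr 1
          have h2 : Radford.g K q m n ^ n * (Radford.g K q m n ^ (m * n - 1)) ^ n = 1 := by
            rw [← pow_mul, ← pow_add]
            have he : n + (m * n - 1) * n = m * n * n := by
              obtain ⟨M, hM⟩ : ∃ M, m * n = M + 1 := ⟨m * n - 1, by have := one_le_mn hm hn; omega⟩
              rw [hM, Nat.add_sub_cancel]
              ring
            rw [he, pow_mul, g_ord, one_pow]
          exact neg_pow_helper (xG_pow hm hn hq n) (cval hn hq) x_pow h2
      | xg =>
          rw [map_smul, map_mul, map_mul, FreeAlgebra.lift_ι_apply, FreeAlgebra.lift_ι_apply,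
            if_pos rfl, if_neg (by simp), ← MulOpposite.op_mul, ← MulOpposite.op_mul,
            ← MulOpposite.op_smul]
          congr 1
          exact antipode_xg_helper (Gx hm hn hq)⟩

end Maps

section Values

variable {K : Type*} [Field K] {q : K} {m n : ℕ}

open RadfordAux

lemma Δ_g (hn : 1 ≤ n) (hq : IsPrimitiveRoot q n) :
    Maps.Δmap K q m n hn hq (Radford.g K q m n)
      = Radford.g K q m n ⊗ₜ[K] Radford.g K q m n := by
  simp [Maps.Δmap, RingQuot.liftAlgHom_mkAlgHom_apply, FreeAlgebra.lift_ι_apply]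

lemma Δ_x (hn : 1 ≤ n) (hq : IsPrimitiveRoot q n) :
    Maps.Δmap K q m n hn hq (Radford.x K q m n)
      = Radford.x K q m n ⊗ₜ[K] Radford.g K q m n + 1 ⊗ₜ[K] Radford.x K q m n := by
  simp [Maps.Δmap, RingQuot.liftAlgHom_mkAlgHom_apply, FreeAlgebra.lift_ι_apply]

lemma ε_g (hn : 1 ≤ n) : Maps.εmap K q m n hn (Radford.g K q m n) = 1 := by
  simp [Maps.εmap, RingQuot.liftAlgHom_mkAlgHom_apply, FreeAlgebra.lift_ι_apply]

lemma ε_x (hn : 1 ≤ n) : Maps.εmap K q m n hn (Radford.x K q m n) = 0 := by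
  simp [Maps.εmap, RingQuot.liftAlgHom_mkAlgHom_apply, FreeAlgebra.lift_ι_apply]

/-- The antipode as a linear endomorphism. -/
noncomputable def Smap (hm : 2 ≤ m) (hn : 1 ≤ n) (hq : IsPrimitiveRoot q n) :
    Radford K q m n →ₗ[K] Radford K q m n :=
  ((MulOpposite.opLinearEquiv K).symm.toLinearMap).comp
    (Maps.Smap' K q m n hm hn hq).toLinearMap

lemma Smap_apply (hm : 2 ≤ m) (hn : 1 ≤ n) (hq : IsPrimitiveRoot q n) (a : Radford K q m n) :
    Smap hm hn hq a = (Maps.Smap' K q m n hm hn hq a).unop := rfl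

lemma Smap_mul (hm : 2 ≤ m) (hn : 1 ≤ n) (hq : IsPrimitiveRoot q n) (u v : Radford K q m n) :
    Smap hm hn hq (u * v) = Smap hm hn hq v * Smap hm hn hq u := by
  rw [Smap_apply, Smap_apply, Smap_apply, map_mul, MulOpposite.unop_mul]

lemma Smap_one (hm : 2 ≤ m) (hn : 1 ≤ n) (hq : IsPrimitiveRoot q n) :
    Smap hm hn hq (1 : Radford K q m n) = 1 := by
  rw [Smap_apply, map_one, MulOpposite.unop_one]

lemma S_g (hm : 2 ≤ m) (hn : 1 ≤ n) (hq : IsPrimitiveRoot q n) :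
    Smap hm hn hq (Radford.g K q m n) = Radford.g K q m n ^ (m * n - 1) := by
  rw [Smap_apply]
  simp [Maps.Smap', RingQuot.liftAlgHom_mkAlgHom_apply, FreeAlgebra.lift_ι_apply]

lemma S_x (hm : 2 ≤ m) (hn : 1 ≤ n) (hq : IsPrimitiveRoot q n) :
    Smap hm hn hq (Radford.x K q m n)
      = -(Radford.x K q m n * Radford.g K q m n ^ (m * n - 1)) := by
  rw [Smap_apply]
  simp [Maps.Smap', RingQuot.liftAlgHom_mkAlgHom_apply, FreeAlgebra.lift_ι_apply]

lemma algHom_ext {A : Type*} [Semiring A] [Algebra K A]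
    {f h : Radford K q m n →ₐ[K] A}
    (h1 : f (Radford.g K q m n) = h (Radford.g K q m n))
    (h2 : f (Radford.x K q m n) = h (Radford.x K q m n)) : f = h := by
  apply AlgHom.ext
  intro a
  obtain ⟨w, rfl⟩ := RingQuot.mkAlgHom_surjective K (RadfordRel K q m n) a
  induction w using FreeAlgebra.induction with
  | grade0 r => simp [AlgHom.commutes]
  | grade1 b => cases b with
      | true => exact h1
      | false => exact h2
  | mul a b ha hb => simp only [map_mul, ha, hb]
  | add a b ha hb => simp only [map_add, ha, hb]

end Values

section Helpers

variable {A : Type*} [Ring A]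

lemma Qx_left (s x G g v : A) (hGg : G * g = 1) :
    (s * -(x * G)) * (g * v) + s * (x * v) = 0 := by
  rw [mul_assoc, neg_mul, mul_assoc, ← mul_assoc G g v, hGg, one_mul, mul_neg,
    neg_add_cancel]

lemma Qx_right (u x G s : A) : (u * x) * (G * s) + u * (-(x * G) * s) = 0 := by
  rw [neg_mul, mul_neg, mul_assoc, ← mul_assoc x G s, add_neg_cancel]

lemma Qg_left (s G g v : A) (hGg : G * g = 1) : (s * G) * (g * v) = s * v := by
  rw [mul_assoc, ← mul_assoc G g v, hGg, one_mul]

lemma Qg_right (u g G s : A) (hgG : g * G = 1) : (u * g) * (G * s) = u * s := by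
  rw [mul_assoc, ← mul_assoc g G s, hgG, one_mul]

end Helpers


set_option maxHeartbeats 3200000 in
/-- there is a Hopf algebra structure on `R = R_{mn}(q)` (i.e. algebra
maps `Δ : R → R ⊗ R` and `ε : R → k`, coassociative and counital, together with an
antipode `S`) satisfying `Δ(g) = g⊗g`, `Δ(x) = x⊗g + 1⊗x`, `ε(g) = 1`, `ε(x) = 0`,
`S(g) = g^{mn-1}` and `S(x) = -x g⁻¹ = -x g^{mn-1}`. -/
theorem radford_hopf_structure (K : Type*) [Field K] [IsAlgClosed K]
    (m n : ℕ) (hm : 2 ≤ m) (hn : 1 ≤ n) (hchar : ¬ (ringChar K ∣ m * n))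
    (q : K) (hq : IsPrimitiveRoot q n) :
    ∃ (Δ : Radford K q m n →ₐ[K] (Radford K q m n ⊗[K] Radford K q m n))
      (ε : Radford K q m n →ₐ[K] K)
      (S : Radford K q m n →ₗ[K] Radford K q m n),
      -- coassociativity
      (∀ a : Radford K q m n,
        (TensorProduct.assoc K (Radford K q m n) (Radford K q m n) (Radford K q m n))
            ((Algebra.TensorProduct.map Δ (AlgHom.id K (Radford K q m n))) (Δ a)) =
          (Algebra.TensorProduct.map (AlgHom.id K (Radford K q m n)) Δ) (Δ a)) ∧
      -- counit axioms
      (∀ a : Radford K q m n,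
        (TensorProduct.lid K (Radford K q m n))
          ((TensorProduct.map ε.toLinearMap LinearMap.id) (Δ a)) = a) ∧
      (∀ a : Radford K q m n,
        (TensorProduct.rid K (Radford K q m n))
          ((TensorProduct.map LinearMap.id ε.toLinearMap) (Δ a)) = a) ∧
      -- antipode axioms
      (∀ a : Radford K q m n,
        LinearMap.mul' K (Radford K q m n) ((TensorProduct.map S LinearMap.id) (Δ a)) =
          algebraMap K (Radford K q m n) (ε a)) ∧
      (∀ a : Radford K q m n,
        LinearMap.mul' K (Radford K q m n) ((TensorProduct.map LinearMap.id S) (Δ a)) =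
          algebraMap K (Radford K q m n) (ε a)) ∧
      -- the structure maps on the generators
      Δ (Radford.g K q m n) = Radford.g K q m n ⊗ₜ[K] Radford.g K q m n ∧
      Δ (Radford.x K q m n) =
        Radford.x K q m n ⊗ₜ[K] Radford.g K q m n + 1 ⊗ₜ[K] Radford.x K q m n ∧
      ε (Radford.g K q m n) = 1 ∧
      ε (Radford.x K q m n) = 0 ∧
      S (Radford.g K q m n) = Radford.g K q m n ^ (m * n - 1) ∧
      S (Radford.x K q m n) = -(Radford.x K q m n * Radford.g K q m n ^ (m * n - 1)) := by
  refine ⟨Maps.Δmap K q m n hn hq, Maps.εmap K q m n hn, Smap (q := q) hm hn hq,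
    ?_, ?_, ?_, ?_, ?_, Δ_g hn hq, Δ_x hn hq, ε_g hn, ε_x hn,
    S_g hm hn hq, S_x hm hn hq⟩
  · -- coassociativity
    have hco : (Algebra.TensorProduct.assoc K K K (Radford K q m n) (Radford K q m n) (Radford K q m n)).toAlgHom.comp
          ((Algebra.TensorProduct.map (Maps.Δmap K q m n hn hq) (AlgHom.id K (Radford K q m n))).comp (Maps.Δmap K q m n hn hq))
        = (Algebra.TensorProduct.map (AlgHom.id K (Radford K q m n)) (Maps.Δmap K q m n hn hq)).comp (Maps.Δmap K q m n hn hq) := by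
      apply algHom_ext
      · simp [AlgHom.comp_apply, Δ_g hn hq]
      · simp [AlgHom.comp_apply, Δ_x hn hq, Δ_g hn hq, TensorProduct.add_tmul,
          TensorProduct.tmul_add, Algebra.TensorProduct.one_def, add_assoc]
    intro a
    exact AlgHom.congr_fun hco a
  · -- left counit
    have hcu : (Algebra.TensorProduct.lid K (Radford K q m n)).toAlgHom.comp
          ((Algebra.TensorProduct.map (Maps.εmap K q m n hn) (AlgHom.id K (Radford K q m n))).comp (Maps.Δmap K q m n hn hq)) = AlgHom.id K (Radford K q m n) := by
      apply algHom_ext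
      · simp [AlgHom.comp_apply, Δ_g hn hq, ε_g hn]
      · simp [AlgHom.comp_apply, Δ_x hn hq, ε_g hn, ε_x hn]
    intro a
    exact AlgHom.congr_fun hcu a
  · -- right counit
    have hcu : (Algebra.TensorProduct.rid K K (Radford K q m n)).toAlgHom.comp
          ((Algebra.TensorProduct.map (AlgHom.id K (Radford K q m n)) (Maps.εmap K q m n hn)).comp (Maps.Δmap K q m n hn hq)) = AlgHom.id K (Radford K q m n) := by
      apply algHom_ext
      · simp [AlgHom.comp_apply, Δ_g hn hq, ε_g hn]
      · simp [AlgHom.comp_apply, Δ_x hn hq, ε_g hn, ε_x hn]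
    intro a
    have h1 : (TensorProduct.map LinearMap.id (Maps.εmap K q m n hn).toLinearMap) ((Maps.Δmap K q m n hn hq) a)
        = (Algebra.TensorProduct.map (AlgHom.id K (Radford K q m n)) (Maps.εmap K q m n hn)) ((Maps.Δmap K q m n hn hq) a) := by
      induction (Maps.Δmap K q m n hn hq) a using TensorProduct.induction_on with
      | zero => simp
      | tmul u v => simp
      | add s t hs ht => simp only [map_add, hs, ht]
    have h2 : ∀ z : Radford K q m n ⊗[K] K,
        TensorProduct.rid K (Radford K q m n) z
          = Algebra.TensorProduct.rid K K (Radford K q m n) z := by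
      intro z
      induction z using TensorProduct.induction_on with
      | zero => simp
      | tmul u v => simp [Algebra.TensorProduct.rid_tmul]
      | add s t hs ht => simp only [map_add, hs, ht]
    rw [h1, h2]
    exact AlgHom.congr_fun hcu a
  · -- left antipode axiom
    have hP : ∀ (a : Radford K q m n) (t : Radford K q m n ⊗[K] Radford K q m n),
        LinearMap.mul' K (Radford K q m n) ((TensorProduct.map (Smap (q := q) hm hn hq) LinearMap.id) ((Maps.Δmap K q m n hn hq) a * t))
          = (Maps.εmap K q m n hn) a • LinearMap.mul' K (Radford K q m n) ((TensorProduct.map (Smap (q := q) hm hn hq) LinearMap.id) t) := by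
      intro a
      obtain ⟨w, rfl⟩ := RingQuot.mkAlgHom_surjective K (RadfordRel K q m n) a
      induction w using FreeAlgebra.induction with
      | grade0 r =>
          intro t
          simp only [AlgHom.commutes, ← Algebra.smul_def, map_smul]
          simp
      | grade1 b =>
          cases b with
          | true =>
              intro t
              induction t using TensorProduct.induction_on with
              | zero => simp
              | tmul u v =>
                  rw [show (RingQuot.mkAlgHom K (RadfordRel K q m n)) (FreeAlgebra.ι K true)
                    = Radford.g K q m n from rfl, Δ_g hn hq, ε_g hn, one_smul,
                    Algebra.TensorProduct.tmul_mul_tmul]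
                  simp only [TensorProduct.map_tmul, LinearMap.mul'_apply, LinearMap.id_coe,
                    id_eq]
                  rw [Smap_mul, S_g]
                  exact Qg_left _ _ _ _ (RadfordAux.Gg hm hn)
              | add s t hs ht =>
                  simp only [mul_add, map_add, smul_add, hs, ht]
          | false =>
              intro t
              induction t using TensorProduct.induction_on with
              | zero => simp
              | tmul u v =>
                  rw [show (RingQuot.mkAlgHom K (RadfordRel K q m n)) (FreeAlgebra.ι K false)
                    = Radford.x K q m n from rfl, Δ_x hn hq, ε_x hn, zero_smul, add_mul,
                    Algebra.TensorProduct.tmul_mul_tmul, Algebra.TensorProduct.tmul_mul_tmul,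
                    one_mul]
                  simp only [map_add, TensorProduct.map_tmul, LinearMap.mul'_apply,
                    LinearMap.id_coe, id_eq]
                  rw [Smap_mul, S_x]
                  exact Qx_left _ _ _ _ _ (RadfordAux.Gg hm hn)
              | add s t hs ht =>
                  simp only [mul_add, map_add, smul_add, hs, ht]
      | mul a b ha hb =>
          intro t
          simp only [map_mul]
          rw [mul_assoc, ha, hb, smul_smul]
      | add a b ha hb =>
          intro t
          simp only [map_add, add_mul, smul_add, add_smul, ha, hb]
    intro a
    have h := hP a 1
    rw [mul_one] at h
    rw [h, Algebra.TensorProduct.one_def, TensorProduct.map_tmul, LinearMap.mul'_apply,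
      LinearMap.id_coe, id_eq, Smap_one, one_mul]
    exact (Algebra.algebraMap_eq_smul_one ((Maps.εmap K q m n hn) a)).symm
  · -- right antipode axiom
    have hP : ∀ (a : Radford K q m n) (t : Radford K q m n ⊗[K] Radford K q m n),
        LinearMap.mul' K (Radford K q m n) ((TensorProduct.map LinearMap.id (Smap (q := q) hm hn hq)) (t * (Maps.Δmap K q m n hn hq) a))
          = (Maps.εmap K q m n hn) a • LinearMap.mul' K (Radford K q m n) ((TensorProduct.map LinearMap.id (Smap (q := q) hm hn hq)) t) := by
      intro a
      obtain ⟨w, rfl⟩ := RingQuot.mkAlgHom_surjective K (RadfordRel K q m n) a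
      induction w using FreeAlgebra.induction with
      | grade0 r =>
          intro t
          simp only [AlgHom.commutes]
          rw [← Algebra.commutes, ← Algebra.smul_def]
          simp
      | grade1 b =>
          cases b with
          | true =>
              intro t
              induction t using TensorProduct.induction_on with
              | zero => simp
              | tmul u v =>
                  rw [show (RingQuot.mkAlgHom K (RadfordRel K q m n)) (FreeAlgebra.ι K true)
                    = Radford.g K q m n from rfl, Δ_g hn hq, ε_g hn, one_smul,
                    Algebra.TensorProduct.tmul_mul_tmul]
                  simp only [TensorProduct.map_tmul, LinearMap.mul'_apply, LinearMap.id_coe,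
                    id_eq]
                  rw [Smap_mul, S_g]
                  exact Qg_right _ _ _ _ (RadfordAux.gG hm hn)
              | add s t hs ht =>
                  simp only [add_mul, map_add, smul_add, hs, ht]
          | false =>
              intro t
              induction t using TensorProduct.induction_on with
              | zero => simp
              | tmul u v =>
                  rw [show (RingQuot.mkAlgHom K (RadfordRel K q m n)) (FreeAlgebra.ι K false)
                    = Radford.x K q m n from rfl, Δ_x hn hq, ε_x hn, zero_smul, mul_add,
                    Algebra.TensorProduct.tmul_mul_tmul, Algebra.TensorProduct.tmul_mul_tmul,
                    mul_one]
                  simp only [map_add, TensorProduct.map_tmul, LinearMap.mul'_apply,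
                    LinearMap.id_coe, id_eq]
                  rw [Smap_mul, S_g, Smap_mul, S_x]
                  exact Qx_right _ _ _ _
              | add s t hs ht =>
                  simp only [add_mul, map_add, smul_add, hs, ht]
      | mul a b ha hb =>
          intro t
          simp only [map_mul]
          rw [← mul_assoc, hb, ha, smul_smul, mul_comm]
      | add a b ha hb =>
          intro t
          simp only [map_add, mul_add, smul_add, add_smul, ha, hb]
    intro a
    have h := hP a 1
    rw [one_mul] at h
    rw [h, Algebra.TensorProduct.one_def, TensorProduct.map_tmul, LinearMap.mul'_apply,
      LinearMap.id_coe, id_eq, Smap_one, mul_one]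
    exact (Algebra.algebraMap_eq_smul_one ((Maps.εmap K q m n hn) a)).symm
end

section
/- For 0 ≤ i ≤ mn-1 and 0 ≤ j ≤ n-1, define y_{i,j} = (1/(mn)) · (1/(j)!_q) · Σ_{k=0}^{mn-1} ξ^{-ik} α^{k}*β^{j} in the convolution algebra R*. Then y_{i,j}(g^{i₁} x^{j₁}) = δ_{i,i₁} δ_{j,j₁} for all 0 ≤ i₁ ≤ mn-1 and 0 ≤ j₁ ≤ n-1; that is, the y_{i,j} form the basis of R* dual to the basis {g^i x^j} of R. -/
open scoped TensorProduct

/-- The convolution product on the dual `R* = Hom_K(R, K)` of a coalgebra: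
`(f * h)(a) = Σ f(a₍₁₎) h(a₍₂₎)`. -/
noncomputable def conv (K : Type*) {R : Type*} [CommRing K] [AddCommMonoid R]
    [Module K R] [Coalgebra K R] (f h : R →ₗ[K] K) : R →ₗ[K] K :=
  LinearMap.mul' K K ∘ₗ TensorProduct.map f h ∘ₗ Coalgebra.comul

/-- Convolution powers in `R*`; the zeroth power is the unit `ε` of `R*`. -/
noncomputable def convPow (K : Type*) {R : Type*} [CommRing K] [AddCommMonoid R]
    [Module K R] [Coalgebra K R] (f : R →ₗ[K] K) : ℕ → (R →ₗ[K] K)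
  | 0 => Coalgebra.counit
  | j + 1 => conv K f (convPow K f j)

/-- The `q`-factorial `(j)!_q = (1)_q (2)_q ⋯ (j)_q` where `(i)_q = 1 + q + ⋯ + q^{i-1}`. -/
def qFactorial {K : Type*} [Field K] (q : K) : ℕ → K
  | 0 => 1
  | j + 1 => qFactorial q j * (∑ i ∈ Finset.range (j + 1), q ^ i)

def qc {K : Type*} [Field K] (q : K) : ℕ → ℕ → K
  | _, 0 => 1
  | 0, _+1 => 0
  | j+1, t+1 => q ^ (j - t) * qc q j t + qc q j (t+1)

lemma qc_zero_right {K : Type*} [Field K] (q : K) (j : ℕ) : qc q j 0 = 1 := by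
  cases j <;> rfl

lemma qc_eq_zero {K : Type*} [Field K] (q : K) : ∀ j t : ℕ, j < t → qc q j t = 0
  | 0, _+1, _ => rfl
  | j+1, t+1, h => by
      show q ^ (j - t) * qc q j t + qc q j (t+1) = 0
      rw [qc_eq_zero q j t (by omega), qc_eq_zero q j (t+1) (by omega)]
      ring

lemma qc_one_right {K : Type*} [Field K] (q : K) :
    ∀ j : ℕ, qc q j 1 = ∑ i ∈ Finset.range j, q ^ i
  | 0 => by simp [qc]
  | j+1 => by
      show q ^ (j - 0) * qc q j 0 + qc q j 1 = _
      rw [qc_zero_right, qc_one_right q j, Finset.sum_range_succ, Nat.sub_zero]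
      ring

lemma qc_succ_succ {K : Type*} [Field K] (q : K) (j t : ℕ) :
    qc q (j+1) (t+1) = q ^ (j - t) * qc q j t + qc q j (t+1) := rfl

lemma x_pow_mul_g {K : Type*} [Field K] {R : Type*} [Ring R] [Algebra K R]
    (q : K) (g x : R) (hxg : x * g = q • (g * x)) (s : ℕ) :
    x ^ s * g = q ^ s • (g * x ^ s) := by
  induction s with
  | zero => simp
  | succ s ih =>
    calc x ^ (s+1) * g = x ^ s * (x * g) := by rw [pow_succ, mul_assoc]
      _ = q • (x ^ s * (g * x)) := by rw [hxg, mul_smul_comm]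
      _ = q • ((x ^ s * g) * x) := by rw [mul_assoc]
      _ = q • ((q ^ s • (g * x ^ s)) * x) := by rw [ih]
      _ = q ^ (s+1) • (g * x ^ (s+1)) := by
            rw [smul_mul_assoc, smul_smul, mul_assoc, ← pow_succ, ← pow_succ']

lemma comul_g_pow_x_pow {K : Type*} [Field K] {R : Type*} [Ring R] [HopfAlgebra K R]
    (q : K) (g x : R) (hxg : x * g = q • (g * x))
    (hcg : Coalgebra.comul (R := K) g = g ⊗ₜ[K] g)
    (hcx : Coalgebra.comul (R := K) x = x ⊗ₜ[K] g + 1 ⊗ₜ[K] x)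
    (a b : ℕ) :
    Coalgebra.comul (R := K) (g ^ a * x ^ b) =
      ∑ t ∈ Finset.range (b + 1),
        qc q b t • ((g ^ a * x ^ t) ⊗ₜ[K] (g ^ (a + t) * x ^ (b - t))) := by
  induction b with
  | zero =>
    simp [Finset.sum_range_one, qc_zero_right, Bialgebra.comul_pow, hcg,
      Algebra.TensorProduct.tmul_pow]
  | succ b ih =>
    have e1 : g ^ a * x ^ (b+1) = (g ^ a * x ^ b) * x := by rw [pow_succ, mul_assoc]
    rw [e1, Bialgebra.comul_mul, ih, hcx, Finset.sum_mul]
    have e2 : ∀ t ∈ Finset.range (b+1),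
        (qc q b t • ((g ^ a * x ^ t) ⊗ₜ[K] (g ^ (a+t) * x ^ (b-t)))) * (x ⊗ₜ[K] g + 1 ⊗ₜ[K] x)
        = (q ^ (b - t) * qc q b t) • ((g ^ a * x ^ (t+1)) ⊗ₜ[K] (g ^ (a+t+1) * x ^ (b-t)))
          + qc q b t • ((g ^ a * x ^ t) ⊗ₜ[K] (g ^ (a+t) * x ^ (b+1-t))) := by
      intro t ht
      rw [Finset.mem_range] at ht
      rw [smul_mul_assoc, mul_add, Algebra.TensorProduct.tmul_mul_tmul,
        Algebra.TensorProduct.tmul_mul_tmul, mul_one, smul_add]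
      congr 1
      · rw [mul_assoc (g ^ (a+t)), x_pow_mul_g q g x hxg (b - t), mul_smul_comm,
          ← mul_assoc (g ^ (a+t)), ← pow_succ, TensorProduct.tmul_smul, smul_smul,
          mul_assoc (g ^ a), ← pow_succ, mul_comm (qc q b t)]
      · have hbt : b - t + 1 = b + 1 - t := by omega
        rw [mul_assoc (g ^ (a+t)), ← pow_succ, hbt]
    rw [Finset.sum_congr rfl e2, Finset.sum_add_distrib]
    rw [Finset.sum_range_succ' _ (b+1)]
    have e3 : ∀ t, qc q (b+1) (t+1) • ((g ^ a * x ^ (t+1)) ⊗ₜ[K]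
        (g ^ (a + (t+1)) * x ^ (b + 1 - (t+1))))
        = (q ^ (b - t) * qc q b t) • ((g ^ a * x ^ (t+1)) ⊗ₜ[K] (g ^ (a+t+1) * x ^ (b-t)))
          + qc q b (t+1) • ((g ^ a * x ^ (t+1)) ⊗ₜ[K] (g ^ (a+t+1) * x ^ (b-t))) := by
      intro t
      rw [qc_succ_succ, add_smul]
      simp only [Nat.add_sub_add_right, ← add_assoc]
    rw [Finset.sum_congr rfl (fun t _ => e3 t), Finset.sum_add_distrib]
    -- now match the two second sums
    have e4 : ∑ t ∈ Finset.range (b+1),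
        qc q b t • ((g ^ a * x ^ t) ⊗ₜ[K] (g ^ (a+t) * x ^ (b+1-t)))
        = ∑ t ∈ Finset.range (b+1),
          qc q b (t+1) • ((g ^ a * x ^ (t+1)) ⊗ₜ[K] (g ^ (a+t+1) * x ^ (b-t)))
          + qc q (b+1) 0 • ((g ^ a * x ^ 0) ⊗ₜ[K] (g ^ (a+0) * x ^ (b+1-0))) := by
      rw [Finset.sum_range_succ
        (fun t => qc q b (t+1) • ((g ^ a * x ^ (t+1)) ⊗ₜ[K] (g ^ (a+t+1) * x ^ (b-t)))) b,
        qc_eq_zero q b (b+1) (by omega), zero_smul, add_zero,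
        Finset.sum_range_succ'
          (fun t => qc q b t • ((g ^ a * x ^ t) ⊗ₜ[K] (g ^ (a+t) * x ^ (b+1-t)))) b]
      congr 1
      · refine Finset.sum_congr rfl fun t ht => ?_
        simp only [Nat.add_sub_add_right, ← add_assoc]
      · rw [qc_zero_right, qc_zero_right]
    rw [e4]
    abel

lemma conv_apply_g_pow_x_pow {K : Type*} [Field K] {R : Type*} [Ring R] [HopfAlgebra K R]
    (q : K) (g x : R) (hxg : x * g = q • (g * x))
    (hcg : Coalgebra.comul (R := K) g = g ⊗ₜ[K] g)
    (hcx : Coalgebra.comul (R := K) x = x ⊗ₜ[K] g + 1 ⊗ₜ[K] x)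
    (f h : R →ₗ[K] K) (a b : ℕ) :
    conv K f h (g ^ a * x ^ b) =
      ∑ t ∈ Finset.range (b+1),
        qc q b t * (f (g ^ a * x ^ t) * h (g ^ (a+t) * x ^ (b-t))) := by
  rw [conv, LinearMap.comp_apply, LinearMap.comp_apply,
    comul_g_pow_x_pow q g x hxg hcg hcx a b, map_sum, map_sum]
  refine Finset.sum_congr rfl fun t _ => ?_
  rw [map_smul, TensorProduct.map_tmul, map_smul, LinearMap.mul'_apply, smul_eq_mul]

/-- the elements
`y_{i,j} = (1/(mn)) (1/(j)!_q) Σ_{k=0}^{mn-1} ξ^{-ik} α^k * β^j` of `R*` satisfy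
`y_{i,j}(g^{i₁} x^{j₁}) = δ_{i,i₁} δ_{j,j₁}` — i.e. they form the basis of `R*` dual
to the basis `{g^i x^j}` of `R`. -/
theorem radford_dual_basis_formula (K : Type*) [Field K] [IsAlgClosed K]
    (m n : ℕ) (hm : 2 ≤ m) (hn : 1 ≤ n) (hchar : ¬ (ringChar K ∣ m * n))
    (q : K) (hq : IsPrimitiveRoot q n)
    (ξ : K) (hξ : IsPrimitiveRoot ξ (m * n)) (hξm : ξ ^ m = q)
    (R : Type*) [Ring R] [HopfAlgebra K R] (g x : R)
    (hgo : g ^ (m * n) = 1) (hxn : x ^ n = g ^ n - 1) (hxg : x * g = q • (g * x))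
    (B : Module.Basis (Fin (m * n) × Fin n) K R)
    (hB : ∀ p : Fin (m * n) × Fin n, B p = g ^ (p.1 : ℕ) * x ^ (p.2 : ℕ))
    (hcg : Coalgebra.comul (R := K) g = g ⊗ₜ[K] g)
    (hcx : Coalgebra.comul (R := K) x = x ⊗ₜ[K] g + 1 ⊗ₜ[K] x)
    (heg : Coalgebra.counit (R := K) g = (1 : K))
    (hex : Coalgebra.counit (R := K) x = (0 : K))
    (α β : R →ₗ[K] K)
    (hα : ∀ (i : Fin (m * n)) (j : Fin n),
      α (g ^ (i : ℕ) * x ^ (j : ℕ)) = if (j : ℕ) = 0 then ξ ^ (i : ℕ) else 0)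
    (hβ : ∀ (i : Fin (m * n)) (j : Fin n),
      β (g ^ (i : ℕ) * x ^ (j : ℕ)) = if (j : ℕ) = 1 then 1 else 0) :
    ∀ (i i₁ : Fin (m * n)) (j j₁ : Fin n),
      (((m * n : K))⁻¹ • (qFactorial q (j : ℕ))⁻¹ •
          ∑ k ∈ Finset.range (m * n),
            ξ⁻¹ ^ ((i : ℕ) * k) • conv K (convPow K α k) (convPow K β (j : ℕ)))
        (g ^ (i₁ : ℕ) * x ^ (j₁ : ℕ)) =
      if i = i₁ ∧ j = j₁ then 1 else 0 := by
  intro i i₁ j j₁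
  have hmn0 : 0 < m * n := Nat.mul_pos (by omega) (by omega)
  have hξ1 : ξ ^ (m * n) = 1 := hξ.pow_eq_one
  have hξne : ξ ≠ 0 := by
    intro h
    rw [h, zero_pow hmn0.ne'] at hξ1
    exact zero_ne_one hξ1
  have hgpow : ∀ a : ℕ, g ^ a = g ^ (a % (m*n)) := by
    intro a
    conv_lhs => rw [← Nat.div_add_mod a (m*n)]
    rw [pow_add, pow_mul, hgo, one_pow, one_mul]
  have hξpow : ∀ a : ℕ, ξ ^ a = ξ ^ (a % (m*n)) := by
    intro a
    conv_lhs => rw [← Nat.div_add_mod a (m*n)]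
    rw [pow_add, pow_mul, hξ1, one_pow, one_mul]
  have hα' : ∀ a b : ℕ, b < n → α (g ^ a * x ^ b) = if b = 0 then ξ ^ a else 0 := by
    intro a b hb
    have h1 := hα ⟨a % (m*n), Nat.mod_lt a hmn0⟩ ⟨b, hb⟩
    simp only [Fin.val_mk] at h1
    rw [hgpow a, h1, ← hξpow a]
  have hβ' : ∀ a b : ℕ, b < n → β (g ^ a * x ^ b) = if b = 1 then 1 else 0 := by
    intro a b hb
    have h1 := hβ ⟨a % (m*n), Nat.mod_lt a hmn0⟩ ⟨b, hb⟩
    simp only [Fin.val_mk] at h1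
    rw [hgpow a, h1]
  have hcnt : ∀ a b : ℕ, Coalgebra.counit (R := K) (g ^ a * x ^ b)
      = if b = 0 then 1 else 0 := by
    intro a b
    rw [Bialgebra.counit_mul, Bialgebra.counit_pow, Bialgebra.counit_pow, heg, hex,
      one_pow, one_mul]
    cases b with
    | zero => simp
    | succ b => simp
  have hconv := conv_apply_g_pow_x_pow q g x hxg hcg hcx
  have hA : ∀ (k a b : ℕ), b < n → convPow K α k (g ^ a * x ^ b)
      = if b = 0 then ξ ^ (a * k) else 0 := by
    intro k
    induction k with
    | zero =>
      intro a b hb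
      rw [convPow, hcnt]
      by_cases hb0 : b = 0 <;> simp [hb0]
    | succ k ih =>
      intro a b hb
      rw [convPow, hconv α (convPow K α k) a b]
      refine (Finset.sum_eq_single 0 ?_ ?_).trans ?_
      · intro t ht hne
        rw [Finset.mem_range] at ht
        rw [hα' a t (by omega), if_neg hne, zero_mul, mul_zero]
      · intro h0
        exact absurd (Finset.mem_range.2 (by omega)) h0
      · rw [qc_zero_right, one_mul, hα' a 0 (by omega), if_pos rfl, Nat.add_zero,
          Nat.sub_zero, ih a b hb]
        by_cases hb0 : b = 0
        · rw [if_pos hb0, if_pos hb0, ← pow_add]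
          congr 1
          ring
        · simp [hb0]
  have hBv : ∀ (s a b : ℕ), b < n → convPow K β s (g ^ a * x ^ b)
      = if b = s then qFactorial q s else 0 := by
    intro s
    induction s with
    | zero =>
      intro a b hb
      rw [convPow, hcnt]
      by_cases hb0 : b = 0 <;> simp [hb0, qFactorial]
    | succ s ih =>
      intro a b hb
      rw [convPow, hconv β (convPow K β s) a b]
      refine (Finset.sum_eq_single 1 ?_ ?_).trans ?_
      · intro t ht hne
        rw [Finset.mem_range] at ht
        rw [hβ' a t (by omega), if_neg hne, zero_mul, mul_zero]
      · intro h1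
        rw [Finset.mem_range] at h1
        rw [qc_eq_zero q b 1 (by omega), zero_mul]
      · rcases Nat.eq_zero_or_pos b with hb0 | hb1
        · subst hb0
          rw [qc_eq_zero q 0 1 (by omega), zero_mul]
          simp
        · rw [hβ' a 1 (by omega), if_pos rfl, ih (a+1) (b-1) (by omega), qc_one_right, one_mul]
          by_cases hbs : b = s + 1
          · rw [if_pos (by omega : b - 1 = s), if_pos hbs, hbs, qFactorial]
            ring
          · rw [if_neg (by omega), if_neg hbs, mul_zero]
  have hj₁ := j₁.isLt
  have hAB : ∀ k : ℕ, conv K (convPow K α k) (convPow K β (j:ℕ)) (g ^ (i₁:ℕ) * x ^ (j₁:ℕ))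
      = if (j₁:ℕ) = (j:ℕ) then ξ ^ ((i₁:ℕ) * k) * qFactorial q (j:ℕ) else 0 := by
    intro k
    rw [hconv (convPow K α k) (convPow K β (j:ℕ)) (i₁:ℕ) (j₁:ℕ)]
    refine (Finset.sum_eq_single 0 ?_ ?_).trans ?_
    · intro t ht hne
      rw [Finset.mem_range] at ht
      rw [hA k _ t (by omega), if_neg hne, zero_mul, mul_zero]
    · intro h0
      exact absurd (Finset.mem_range.2 (by omega)) h0
    · rw [qc_zero_right, one_mul, hA k _ 0 (by omega), if_pos rfl, Nat.add_zero,
        Nat.sub_zero, hBv (j:ℕ) (i₁:ℕ) (j₁:ℕ) hj₁]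
      by_cases hjj : (j₁:ℕ) = (j:ℕ) <;> simp [hjj]
  have hFne : ∀ s : ℕ, s < n → qFactorial q s ≠ 0 := by
    intro s
    induction s with
    | zero => intro _; exact one_ne_zero
    | succ s ih =>
      intro hs
      rw [qFactorial]
      refine mul_ne_zero (ih (by omega)) ?_
      by_cases hq1 : q = 1
      · have hd : n ∣ 1 := hq.dvd_of_pow_eq_one 1 (by rw [hq1, pow_one])
        have := Nat.le_of_dvd one_pos hd
        omega
      · rw [geom_sum_eq hq1]
        exact div_ne_zero
          (sub_ne_zero.2 (hq.pow_ne_one_of_pos_of_lt (by omega) hs)) (sub_ne_zero.2 hq1)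
  have hmnK : ((m : K) * n) ≠ 0 := by
    intro h
    have hc : CharP K (ringChar K) := ringChar.charP K
    have : ((m * n : ℕ) : K) = 0 := by push_cast; exact h
    exact hchar ((CharP.cast_eq_zero_iff K (ringChar K) (m*n)).mp this)
  simp only [LinearMap.smul_apply, LinearMap.sum_apply]
  simp only [hAB]
  by_cases hjj : j = j₁
  · subst hjj
    simp only [eq_self_iff_true, if_true, and_true]
    have hterm : ∀ k : ℕ, ξ⁻¹ ^ ((i:ℕ) * k) • (ξ ^ ((i₁:ℕ) * k) * qFactorial q (j:ℕ))
        = (ξ⁻¹ ^ (i:ℕ) * ξ ^ (i₁:ℕ)) ^ k * qFactorial q (j:ℕ) := by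
      intro k
      rw [smul_eq_mul, pow_mul, pow_mul, ← mul_assoc, ← mul_pow]
    simp only [hterm]
    rw [← Finset.sum_mul, smul_eq_mul, smul_eq_mul]
    have hFj : qFactorial q (j:ℕ) ≠ 0 := hFne _ j.isLt
    by_cases hii : i = i₁
    · subst hii
      rw [← mul_pow, inv_mul_cancel₀ hξne]
      simp only [one_pow]
      rw [Finset.sum_const, Finset.card_range, nsmul_eq_mul, mul_one]
      rw [if_true]
      push_cast
      field_simp
      exact div_self hmnK
    · have hζ1 : ξ⁻¹ ^ (i:ℕ) * ξ ^ (i₁:ℕ) ≠ 1 := by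
        intro h
        rw [inv_pow, inv_mul_eq_one₀ (pow_ne_zero _ hξne)] at h
        exact hii (Fin.ext (hξ.pow_inj i.isLt i₁.isLt h))
      have h1 : (ξ⁻¹ : K) ^ ((i:ℕ) * (m*n)) = 1 := by
        rw [mul_comm, pow_mul, inv_pow, hξ1, inv_one, one_pow]
      have h2 : ξ ^ ((i₁:ℕ) * (m*n)) = 1 := by
        rw [mul_comm, pow_mul, hξ1, one_pow]
      have hζmn : (ξ⁻¹ ^ (i:ℕ) * ξ ^ (i₁:ℕ)) ^ (m*n) = 1 := by
        rw [mul_pow, ← pow_mul, ← pow_mul, h1, h2, one_mul]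
      rw [geom_sum_eq hζ1, hζmn, sub_self, zero_div, zero_mul, mul_zero, mul_zero]
      rw [if_neg (by simp [hii])]
  · have hne : (j₁:ℕ) ≠ (j:ℕ) := fun h => hjj (Fin.ext h.symm)
    simp [hne, hjj]
end
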